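/- The qubit amplitude-damping channel T_γ with 0 < γ < 1 admits no nonzero Markov–Dobrushin lower bound: if B is positive semidefinite and B ≤ T_γ(P) for every rank-one projection P, then B = 0. Hence α_MD(T_γ) = 0 even though κ_tr(T_γ) = √(1−γ) < 1. -/

import Mathlib

open Matrix
open scoped ComplexOrder

namespace TD

variable {d : ℕ}

/-- The old `Matrix.PosSemidef.sqrt` (removed from Mathlib), with its old definition. -/
noncomputable def psdSqrt {A : Matrix (Fin d) (Fin d) ℂ} (hA : A.PosSemidef) :
    Matrix (Fin d) (Fin d) ℂ :=
  hA.1.eigenvectorUnitary.1 * diagonal ((↑) ∘ Real.sqrt ∘ hA.1.eigenvalues) *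
    (star hA.1.eigenvectorUnitary : Matrix (Fin d) (Fin d) ℂ)

noncomputable def trNorm (A : Matrix (Fin d) (Fin d) ℂ) : ℝ :=
  ((psdSqrt (Matrix.posSemidef_conjTranspose_mul_self A)).trace).re

noncomputable def hsNorm (A : Matrix (Fin d) (Fin d) ℂ) : ℝ :=
  Real.sqrt ((Aᴴ * A).trace.re)

def Density (ρ : Matrix (Fin d) (Fin d) ℂ) : Prop :=
  ρ.PosSemidef ∧ ρ.trace = 1

def PosMap (T : Matrix (Fin d) (Fin d) ℂ →ₗ[ℂ] Matrix (Fin d) (Fin d) ℂ) : Prop :=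
  ∀ A, A.PosSemidef → (T A).PosSemidef

def TrPres (T : Matrix (Fin d) (Fin d) ℂ →ₗ[ℂ] Matrix (Fin d) (Fin d) ℂ) : Prop :=
  ∀ A, (T A).trace = A.trace

noncomputable def kappaTr (T : Matrix (Fin d) (Fin d) ℂ →ₗ[ℂ] Matrix (Fin d) (Fin d) ℂ) : ℝ :=
  ⨆ X : {X : Matrix (Fin d) (Fin d) ℂ // X.IsHermitian ∧ X.trace = 0 ∧ X ≠ 0},
    trNorm (T X.1) / trNorm X.1

noncomputable def opNorm1 (L : Matrix (Fin d) (Fin d) ℂ →ₗ[ℂ] Matrix (Fin d) (Fin d) ℂ) : ℝ :=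
  ⨆ X : {X : Matrix (Fin d) (Fin d) ℂ // X ≠ 0}, trNorm (L X.1) / trNorm X.1

noncomputable def s0 (T : Matrix (Fin d) (Fin d) ℂ →ₗ[ℂ] Matrix (Fin d) (Fin d) ℂ) : ℝ :=
  ⨆ X : {X : Matrix (Fin d) (Fin d) ℂ // X.trace = 0 ∧ X ≠ 0},
    hsNorm (T X.1) / hsNorm X.1

noncomputable def choi (T : Matrix (Fin d) (Fin d) ℂ →ₗ[ℂ] Matrix (Fin d) (Fin d) ℂ) :
    Matrix (Fin d × Fin d) (Fin d × Fin d) ℂ :=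
  Matrix.of fun p q => T (Matrix.single p.1 q.1 1) p.2 q.2

def CP (T : Matrix (Fin d) (Fin d) ℂ →ₗ[ℂ] Matrix (Fin d) (Fin d) ℂ) : Prop :=
  (choi T).PosSemidef

noncomputable def replaceChan (τ : Matrix (Fin d) (Fin d) ℂ) :
    Matrix (Fin d) (Fin d) ℂ →ₗ[ℂ] Matrix (Fin d) (Fin d) ℂ where
  toFun X := X.trace • τ
  map_add' X Y := by simp [Matrix.trace_add, add_smul]
  map_smul' c X := by simp [Matrix.trace_smul, smul_smul]

noncomputable def prodComp {n : ℕ} (T : Fin n → (Matrix (Fin d) (Fin d) ℂ →ₗ[ℂ] Matrix (Fin d) (Fin d) ℂ)) :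
    Matrix (Fin d) (Fin d) ℂ →ₗ[ℂ] Matrix (Fin d) (Fin d) ℂ :=
  (List.ofFn T).foldl (fun acc f => f ∘ₗ acc) LinearMap.id

noncomputable def lpow (T : Matrix (Fin d) (Fin d) ℂ →ₗ[ℂ] Matrix (Fin d) (Fin d) ℂ) :
    ℕ → (Matrix (Fin d) (Fin d) ℂ →ₗ[ℂ] Matrix (Fin d) (Fin d) ℂ)
  | 0 => LinearMap.id
  | n + 1 => T ∘ₗ lpow T n

noncomputable def conjPair (K0 K1 : Matrix (Fin 2) (Fin 2) ℂ) :
    Matrix (Fin 2) (Fin 2) ℂ →ₗ[ℂ] Matrix (Fin 2) (Fin 2) ℂ where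
  toFun X := K0 * X * K0ᴴ + K1 * X * K1ᴴ
  map_add' X Y := by
    simp only [Matrix.mul_add, Matrix.add_mul]
    abel
  map_smul' c X := by
    simp [Matrix.mul_smul, Matrix.smul_mul, smul_add]

end TD

/-!
A traceless Hermitian qubit matrix `X = [[a, b], [b̄, -a]]` satisfies `Xᴴ X = (a² + |b|²) • 1`, so its
trace norm is `2 √(a² + |b|²)`; `T_γ` maps it to the one with parameters `((1 - γ) a, √(1 - γ) b)`,
so the contraction ratio is at most `√(1 - γ)`, with equality at `σₓ`.

For the lower bound, `T_γ` fixes `|0⟩⟨0|`, so `B ≤ |0⟩⟨0|` confines `B` to `b |0⟩⟨0|`. Testing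
`B ≤ T_γ(|ψ⟩⟨ψ|)` for `ψ = (α, β)` against the vector `v = (√(1 - γ) β, -α)`, which is orthogonal to
`K₀ ψ`, leaves only the jump term `K₁`, of order `β²`, and gives `b ≤ γ β²`; letting `β → 0` gives
`b = 0`.
-/

namespace TD

variable {d : ℕ}

lemma psdSqrt_eq_cfc {A : Matrix (Fin d) (Fin d) ℂ} (hA : A.PosSemidef) :
    psdSqrt hA = cfc Real.sqrt A := by
  rw [hA.1.cfc_eq, IsHermitian.cfc, Unitary.conjStarAlgAut_apply]
  rfl

open scoped MatrixOrder in
lemma trNorm_nonneg (A : Matrix (Fin d) (Fin d) ℂ) : 0 ≤ trNorm A := by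
  rw [trNorm, psdSqrt_eq_cfc]
  exact (Complex.le_def.1 (cfc_nonneg fun x _ => Real.sqrt_nonneg x).posSemidef.trace_nonneg).1

lemma trNorm_eq_of_conjTranspose_mul_self_eq_algebraMap {A : Matrix (Fin d) (Fin d) ℂ} {c : ℝ}
    (h : Aᴴ * A = algebraMap ℝ _ c) : trNorm A = d * √c := by
  rw [trNorm, psdSqrt_eq_cfc, h, cfc_algebraMap, Algebra.algebraMap_eq_smul_one, trace_smul,
    trace_one]
  simp [mul_comm]

def hermTraceless (a : ℝ) (b : ℂ) : Matrix (Fin 2) (Fin 2) ℂ :=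
  !![(a : ℂ), b; star b, -(a : ℂ)]

lemma isHermitian_hermTraceless (a : ℝ) (b : ℂ) : (hermTraceless a b).IsHermitian := by
  ext i j
  fin_cases i <;> fin_cases j <;> simp [hermTraceless]

lemma trace_hermTraceless (a : ℝ) (b : ℂ) : (hermTraceless a b).trace = 0 := by
  simp [hermTraceless, trace_fin_two]

lemma eq_hermTraceless_of_isHermitian {X : Matrix (Fin 2) (Fin 2) ℂ} (hX : X.IsHermitian)
    (htr : X.trace = 0) : X = hermTraceless (X 0 0).re (X 0 1) := by
  have h00 : ((X 0 0).re : ℂ) = X 0 0 := hX.coe_re_apply_self 0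
  have h11 : X 1 1 = -X 0 0 := by rw [trace_fin_two] at htr; linear_combination htr
  rw [hermTraceless, h00, ← h11, hX.apply 1 0]
  exact eta_fin_two X

lemma hermTraceless_mul_self (a : ℝ) (b : ℂ) :
    hermTraceless a b * hermTraceless a b = algebraMap ℝ _ (a ^ 2 + Complex.normSq b) := by
  have hb : star b * b = Complex.normSq b := Complex.normSq_eq_conj_mul_self.symm
  rw [hermTraceless, mul_fin_two, algebraMap_eq_diagonal, diagonal_fin_two, mul_comm b, hb]
  ext i j
  fin_cases i <;> fin_cases j <;> simp <;> ring

lemma trNorm_hermTraceless (a : ℝ) (b : ℂ) :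
    trNorm (hermTraceless a b) = 2 * √(a ^ 2 + Complex.normSq b) := by
  refine trNorm_eq_of_conjTranspose_mul_self_eq_algebraMap ?_
  rw [(isHermitian_hermTraceless a b).eq, hermTraceless_mul_self]

noncomputable def ampDamp (γ : ℝ) : Matrix (Fin 2) (Fin 2) ℂ →ₗ[ℂ] Matrix (Fin 2) (Fin 2) ℂ :=
  conjPair !![(1:ℂ),0;0,(√(1 - γ) : ℂ)] !![(0:ℂ),(√γ : ℂ);0,0]

lemma ampDamp_apply {γ : ℝ} (hγ0 : 0 ≤ γ) (hγ1 : γ ≤ 1) (X : Matrix (Fin 2) (Fin 2) ℂ) :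
    ampDamp γ X =
      !![X 0 0 + γ * X 1 1, √(1 - γ) * X 0 1; √(1 - γ) * X 1 0, (1 - γ) * X 1 1] := by
  have hs : (√(1 - γ) : ℂ) * √(1 - γ) = 1 - γ := by
    rw [← Complex.ofReal_mul, Real.mul_self_sqrt (by linarith)]; push_cast; ring
  have hg : (√γ : ℂ) * √γ = γ := by rw [← Complex.ofReal_mul, Real.mul_self_sqrt hγ0]
  rw [eta_fin_two X]
  simp only [ampDamp, conjPair, LinearMap.coe_mk, AddHom.coe_mk]
  ext i j
  fin_cases i <;> fin_cases j <;> simp [vecMul, dotProduct, Fin.sum_univ_two, conjTranspose_apply]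
  · linear_combination X 1 1 * hg
  · ring
  · linear_combination X 1 1 * hs

lemma ampDamp_hermTraceless {γ : ℝ} (hγ0 : 0 ≤ γ) (hγ1 : γ ≤ 1) (a : ℝ) (b : ℂ) :
    ampDamp γ (hermTraceless a b) = hermTraceless ((1 - γ) * a) (√(1 - γ) * b) := by
  rw [ampDamp_apply hγ0 hγ1, hermTraceless, hermTraceless]
  ext i j
  fin_cases i <;> fin_cases j <;> simp
  ring

lemma trNorm_ampDamp_hermTraceless {γ : ℝ} (hγ0 : 0 ≤ γ) (hγ1 : γ ≤ 1) (a : ℝ) (b : ℂ) :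
    trNorm (ampDamp γ (hermTraceless a b)) =
      2 * √((1 - γ) * ((1 - γ) * a ^ 2 + Complex.normSq b)) := by
  rw [ampDamp_hermTraceless hγ0 hγ1, trNorm_hermTraceless, Complex.normSq_mul,
    Complex.normSq_ofReal, Real.mul_self_sqrt (by linarith)]
  ring_nf

lemma trNorm_ampDamp_le {γ : ℝ} (hγ0 : 0 ≤ γ) (hγ1 : γ ≤ 1) {X : Matrix (Fin 2) (Fin 2) ℂ}
    (hX : X.IsHermitian) (htr : X.trace = 0) :
    trNorm (ampDamp γ X) ≤ √(1 - γ) * trNorm X := by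
  rw [eq_hermTraceless_of_isHermitian hX htr, trNorm_ampDamp_hermTraceless hγ0 hγ1,
    trNorm_hermTraceless, mul_left_comm, ← Real.sqrt_mul (by linarith)]
  gcongr
  nlinarith [sq_nonneg (X 0 0).re]

lemma kappaTr_ampDamp {γ : ℝ} (hγ0 : 0 ≤ γ) (hγ1 : γ ≤ 1) :
    kappaTr (ampDamp γ) = √(1 - γ) := by
  have hle : ∀ X : {X : Matrix (Fin 2) (Fin 2) ℂ // X.IsHermitian ∧ X.trace = 0 ∧ X ≠ 0},
      trNorm (ampDamp γ X.1) / trNorm X.1 ≤ √(1 - γ) := fun ⟨_, hX, htr, _⟩ =>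
    div_le_of_le_mul₀ (trNorm_nonneg _) (Real.sqrt_nonneg _) (trNorm_ampDamp_le hγ0 hγ1 hX htr)
  let σx : {X : Matrix (Fin 2) (Fin 2) ℂ // X.IsHermitian ∧ X.trace = 0 ∧ X ≠ 0} :=
    ⟨hermTraceless 0 1, isHermitian_hermTraceless 0 1, trace_hermTraceless 0 1,
      fun h => by simpa [hermTraceless] using congrFun (congrFun h 0) 1⟩
  have hσx : trNorm (ampDamp γ σx.1) / trNorm σx.1 = √(1 - γ) := by
    simp [σx, trNorm_ampDamp_hermTraceless hγ0 hγ1, trNorm_hermTraceless]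
  have : Nonempty {X : Matrix (Fin 2) (Fin 2) ℂ // X.IsHermitian ∧ X.trace = 0 ∧ X ≠ 0} := ⟨σx⟩
  exact le_antisymm (ciSup_le hle) (hσx ▸ le_ciSup ⟨_, Set.forall_mem_range.2 hle⟩ σx)

section

variable {n 𝕜 : Type*} [Fintype n] [RCLike 𝕜]

lemma mulVec_eq_zero_of_posSemidef_sub {A B : Matrix n n 𝕜} (hB : B.PosSemidef)
    (hAB : (A - B).PosSemidef) {v : n → 𝕜} (hv : A *ᵥ v = 0) : B *ᵥ v = 0 := by
  refine (hB.dotProduct_mulVec_zero_iff v).1 (le_antisymm ?_ (hB.dotProduct_mulVec_nonneg v))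
  simpa [sub_mulVec, hv] using hAB.dotProduct_mulVec_nonneg v

lemma vecMulVec_star_mul_self {ψ : n → 𝕜} (hψ : star ψ ⬝ᵥ ψ = 1) :
    vecMulVec ψ (star ψ) * vecMulVec ψ (star ψ) = vecMulVec ψ (star ψ) := by
  rw [vecMulVec_mul_vecMulVec, hψ, one_smul]

lemma trace_vecMulVec_star {ψ : n → 𝕜} (hψ : star ψ ⬝ᵥ ψ = 1) :
    (vecMulVec ψ (star ψ)).trace = 1 := by
  rw [trace_vecMulVec, dotProduct_comm, hψ]

end

lemma star_ofReal_dotProduct_self (α β : ℝ) :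
    star ![(α : ℂ), β] ⬝ᵥ ![(α : ℂ), β] = ((α ^ 2 + β ^ 2 : ℝ) : ℂ) := by
  simp [dotProduct, Fin.sum_univ_two, Complex.conj_ofReal, sq]

lemma ampDamp_ground {γ : ℝ} (hγ0 : 0 ≤ γ) (hγ1 : γ ≤ 1) :
    ampDamp γ (vecMulVec ![1, 0] (star ![1, 0])) = !![1, 0; 0, 0] := by
  rw [ampDamp_apply hγ0 hγ1]
  ext i j
  fin_cases i <;> fin_cases j <;> simp [vecMulVec_apply, Pi.star_apply]

lemma eq_of_posSemidef_sub_ground {B : Matrix (Fin 2) (Fin 2) ℂ} (hB : B.PosSemidef)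
    (h : (!![1, 0; 0, 0] - B).PosSemidef) : B = !![B 0 0, 0; 0, 0] := by
  have hker := mulVec_eq_zero_of_posSemidef_sub hB h (v := ![0, 1])
    (by ext i; fin_cases i <;> simp)
  have h01 : B 0 1 = 0 := by simpa using congrFun hker 0
  have h11 : B 1 1 = 0 := by simpa using congrFun hker 1
  have h10 : B 1 0 = 0 := by rw [← hB.1.apply 1 0, h01, star_zero]
  rw [eta_fin_two B, h01, h10, h11]
  simp

lemma re_le_of_posSemidef_ampDamp_sub {γ α β : ℝ} (hγ0 : 0 ≤ γ) (hγ1 : γ < 1) (hβ : β ≠ 0)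
    {c : ℂ} (h : (ampDamp γ (vecMulVec ![(α : ℂ), β] (star ![(α : ℂ), β])) -
      !![c, 0; 0, 0]).PosSemidef) :
    c.re ≤ γ * β ^ 2 := by
  set s := √(1 - γ)
  have hs : (s : ℂ) * s = 1 - γ := by
    rw [← Complex.ofReal_mul, Real.mul_self_sqrt (by linarith)]; push_cast; ring
  set v : Fin 2 → ℂ := ![s * β, -α]
  have hform : star v ⬝ᵥ ((ampDamp γ (vecMulVec ![(α : ℂ), β] (star ![(α : ℂ), β])) -
      !![c, 0; 0, 0]) *ᵥ v) = (((1 - γ) * β ^ 2 : ℝ) : ℂ) * (((γ * β ^ 2 : ℝ) : ℂ) - c) := by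
    rw [ampDamp_apply hγ0 hγ1.le]
    simp [v, dotProduct, mulVec, Fin.sum_univ_two, Complex.conj_ofReal]
    linear_combination (β ^ 2 * (α ^ 2 + γ * β ^ 2 - c) - 2 * α ^ 2 * β ^ 2 : ℂ) * hs
  have hnonneg := (Complex.le_def.1 (hform ▸ h.dotProduct_mulVec_nonneg v)).1
  rw [Complex.zero_re, Complex.re_ofReal_mul, Complex.sub_re, Complex.ofReal_re] at hnonneg
  have hpos : 0 < (1 - γ) * β ^ 2 := mul_pos (by linarith) (by positivity)
  linarith [(mul_nonneg_iff_of_pos_left hpos).1 hnonneg]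

open Filter in
lemma nonpos_of_forall_le_mul_sq {b γ : ℝ} (h : ∀ β, 0 < β → β ≤ 1 → b ≤ γ * β ^ 2) : b ≤ 0 := by
  have hlim : Tendsto (fun β : ℝ => γ * β ^ 2) (nhdsWithin 0 (Set.Ioi 0)) (nhds 0) := by
    refine ((?_ : Continuous fun β : ℝ => γ * β ^ 2).tendsto' 0 0 (by simp)).mono_left
      nhdsWithin_le_nhds
    fun_prop
  exact ge_of_tendsto hlim (eventually_of_mem (Ioc_mem_nhdsGT one_pos) fun β hβ => h β hβ.1 hβ.2)

end TD

theorem stmt15 (γ : ℝ) (hγ : 0 < γ ∧ γ < 1) :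
    (∀ B : Matrix (Fin 2) (Fin 2) ℂ, B.PosSemidef →
      (∀ P : Matrix (Fin 2) (Fin 2) ℂ, P.IsHermitian → P * P = P → P.trace = 1 →
        ((TD.conjPair !![(1:ℂ),0;0,(Real.sqrt (1-γ) : ℂ)]
            !![(0:ℂ),(Real.sqrt γ : ℂ);0,0]) P - B).PosSemidef) →
      B = 0) ∧
    TD.kappaTr (TD.conjPair !![(1:ℂ),0;0,(Real.sqrt (1-γ) : ℂ)]
        !![(0:ℂ),(Real.sqrt γ : ℂ);0,0]) = Real.sqrt (1-γ) ∧
    Real.sqrt (1-γ) < 1 := by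
  obtain ⟨hγ0, hγ1⟩ := hγ
  refine ⟨fun B hB hall => ?_, TD.kappaTr_ampDamp hγ0.le hγ1.le,
    (Real.sqrt_lt' one_pos).2 (by linarith)⟩
  have hpure : ∀ ψ : Fin 2 → ℂ, star ψ ⬝ᵥ ψ = 1 →
      (TD.ampDamp γ (vecMulVec ψ (star ψ)) - B).PosSemidef := fun ψ hψ =>
    hall _ (posSemidef_vecMulVec_self_star ψ).1 (TD.vecMulVec_star_mul_self hψ)
      (TD.trace_vecMulVec_star hψ)
  obtain ⟨b, rfl⟩ : ∃ b, B = !![b, 0; 0, 0] := ⟨_, TD.eq_of_posSemidef_sub_ground hB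
    (TD.ampDamp_ground hγ0.le hγ1.le ▸ hpure ![1, 0] (by simp [dotProduct, Fin.sum_univ_two]))⟩
  have hre : b.re ≤ 0 := TD.nonpos_of_forall_le_mul_sq fun β hβ0 hβ1 =>
    TD.re_le_of_posSemidef_ampDamp_sub (α := √(1 - β ^ 2)) hγ0.le hγ1 hβ0.ne' (hpure _ (by
      rw [TD.star_ofReal_dotProduct_self, Real.sq_sqrt (by nlinarith)]
      simp))
  have hb0 : 0 ≤ b := by simpa using hB.diag_nonneg (i := 0)
  have hb : b = 0 := le_antisymm (Complex.le_def.2 ⟨hre, (Complex.le_def.1 hb0).2.symm⟩) hb0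
  rw [hb]
  exact (eta_fin_two 0).symm
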